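/- Let 0 < γ < 1 and let H(x) = x·log₂ x + (1−x)·log₂(1−x) for 0 < x < 1 be the (negative) Shannon entropy function. For x ∈ [0,1) let (δ_i(x))_{i≥1} be the binary digit sequence of x (choosing the expansion that is not eventually all 1s), so that x = Σ_{i=1}^{∞} δ_i(x) 2^{−i}. Let E_γ be the set of all x ∈ [0,1) such that the asymptotic density of digit changes equals γ, i.e. lim_{N→∞} (1/N)·#{ 1 ≤ i ≤ N−1 : δ_{i+1}(x) ≠ δ_i(x) } = γ. Then the Hausdorff dimension of E_γ satisfies dim_H(E_γ) ≤ −H(γ) = −( γ·log₂ γ + (1−γ)·log₂(1−γ) ). -/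

import Mathlib

/-!
The first `N` binary digits of `x` are the `N`-bit string of `k = ⌊x 2^N⌋₊`, and such a string is
determined by its first digit and the set of positions where it changes. Hence at most
`2 C(N-1, c)` of the `2^N` dyadic intervals of level `N` carry exactly `c` changes, and
`C(N-1, c) ≤ γ^(-c) (1-γ)^(-(N-1-c)) ≤ 2^(N(-H(γ) + O(|c/N - γ|)))`, because
`C(n, c) γ^c (1-γ)^(n-c)` is one term of `(γ + (1-γ))^n = 1`. If the change density stays within
`ε` of `γ` from level `M` on, these intervals cover the set with total `d`-dimensional mass
`O(N 2^(-Nε))` for `d = -H(γ) + O(ε)`, so its Hausdorff dimension is at most `d`; a countable union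
over `M` and `ε → 0` finish the proof.
-/

/-- The `i`-th binary digit of `x ∈ [0,1)` (the expansion that is not
eventually all `1`s): `binDigit x i = ⌊x·2^i⌋ mod 2`. -/
noncomputable def binDigit (x : ℝ) (i : ℕ) : ℕ := ⌊x * 2 ^ i⌋.toNat % 2

/-- The number of digit changes among the first `N` binary digits:
`#{1 ≤ i ≤ N-1 : δ_{i+1}(x) ≠ δ_i(x)}`. -/
noncomputable def changeCount (x : ℝ) (N : ℕ) : ℕ :=
  ((Finset.Icc 1 (N - 1)).filter (fun i => binDigit x (i + 1) ≠ binDigit x i)).card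

open Real Filter MeasureTheory Finset
open scoped Topology

/-- The `i`-th of the `N` binary digits of `k`, counted from the most significant one. -/
def digitOf (N k i : ℕ) : ℕ := k / 2 ^ (N - i) % 2

def changeSet (N k : ℕ) : Finset ℕ :=
  {i ∈ Icc 1 (N - 1) | digitOf N k (i + 1) ≠ digitOf N k i}

lemma binDigit_eq_digitOf (x : ℝ) {i N : ℕ} (h : i ≤ N) :
    binDigit x i = digitOf N ⌊x * 2 ^ N⌋₊ i := by
  have hscale : x * 2 ^ i = x * 2 ^ N / ((2 ^ (N - i) : ℕ) : ℝ) := by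
    rw [show (2 : ℝ) ^ N = 2 ^ i * 2 ^ (N - i) by rw [← pow_add, Nat.add_sub_cancel' h]]
    push_cast
    field_simp
  rw [binDigit, digitOf, Int.floor_toNat, hscale, Nat.floor_div_natCast]

lemma changeCount_eq_card_changeSet (x : ℝ) (N : ℕ) :
    changeCount x N = #(changeSet N ⌊x * 2 ^ N⌋₊) := by
  refine congrArg card (filter_congr fun i hi => ?_)
  rw [mem_Icc] at hi
  rw [binDigit_eq_digitOf x (by omega : i + 1 ≤ N), binDigit_eq_digitOf x (by omega : i ≤ N)]

lemma card_changeSet_le (N k : ℕ) : #(changeSet N k) ≤ N - 1 :=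
  (card_filter_le _ _).trans (by simp)

lemma digitOf_eq_of_changeSet_eq {N a b : ℕ} (h1 : digitOf N a 1 = digitOf N b 1)
    (hs : changeSet N a = changeSet N b) {i : ℕ} (hi : 1 ≤ i) (hiN : i ≤ N) :
    digitOf N a i = digitOf N b i := by
  induction i, hi using Nat.le_induction with
  | base => exact h1
  | succ i hi ih =>
    have hmem : i ∈ changeSet N a ↔ i ∈ changeSet N b := by rw [hs]
    simp only [changeSet, mem_filter, mem_Icc] at hmem
    have := ih (by omega)
    have ha := Nat.mod_lt (a / 2 ^ (N - (i + 1))) two_pos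
    have hb := Nat.mod_lt (b / 2 ^ (N - (i + 1))) two_pos
    have ha' := Nat.mod_lt (a / 2 ^ (N - i)) two_pos
    have hb' := Nat.mod_lt (b / 2 ^ (N - i)) two_pos
    simp only [digitOf] at *
    omega

lemma eq_of_digitOf_eq {N a b : ℕ} (ha : a < 2 ^ N) (hb : b < 2 ^ N)
    (h : ∀ i, 1 ≤ i → i ≤ N → digitOf N a i = digitOf N b i) : a = b := by
  refine Nat.eq_of_testBit_eq fun j => ?_
  rcases lt_or_ge j N with hj | hj
  · have := h (N - j) (by omega) (by omega)
    rw [digitOf, digitOf, Nat.sub_sub_self hj.le] at this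
    simp [Nat.testBit_eq_decide_div_mod_eq, this]
  · have hpow := Nat.pow_le_pow_right two_pos hj
    rw [Nat.testBit_eq_false_of_lt (ha.trans_le hpow),
      Nat.testBit_eq_false_of_lt (hb.trans_le hpow)]

lemma card_filter_card_changeSet_eq_le (N c : ℕ) :
    #{k ∈ range (2 ^ N) | #(changeSet N k) = c} ≤ 2 * (N - 1).choose c := by
  calc #{k ∈ range (2 ^ N) | #(changeSet N k) = c}
      ≤ #(range 2 ×ˢ (Icc 1 (N - 1)).powersetCard c) := by
        refine card_le_card_of_injOn (fun k => (digitOf N k 1, changeSet N k))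
          (fun k hk => ?_) fun a ha b hb hab => ?_
        · simp only [coe_filter, mem_range, Set.mem_ofPred_eq] at hk
          simp only [coe_product, Set.mem_prod, mem_coe, mem_range, mem_powersetCard]
          exact ⟨Nat.mod_lt _ two_pos, filter_subset _ _, hk.2⟩
        · simp only [coe_filter, mem_range, Set.mem_ofPred_eq, Prod.mk.injEq] at ha hb hab
          exact eq_of_digitOf_eq ha.1 hb.1 fun i hi hiN =>
            digitOf_eq_of_changeSet_eq hab.1 hab.2 hi hiN
    _ = 2 * (N - 1).choose c := by simp

lemma choose_mul_pow_mul_pow_le_one {p : ℝ} (hp0 : 0 ≤ p) (hp1 : p ≤ 1) {n c : ℕ} (hc : c ≤ n) :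
    n.choose c * p ^ c * (1 - p) ^ (n - c) ≤ 1 := by
  have hq : 0 ≤ 1 - p := by linarith
  calc (n.choose c : ℝ) * p ^ c * (1 - p) ^ (n - c)
      = p ^ c * (1 - p) ^ (n - c) * n.choose c := by ring
    _ ≤ ∑ m ∈ range (n + 1), p ^ m * (1 - p) ^ (n - m) * n.choose m :=
        single_le_sum (f := fun m => p ^ m * (1 - p) ^ (n - m) * n.choose m)
          (fun m _ => by positivity) (mem_range.2 (Nat.lt_succ_of_le hc))
    _ = 1 := by rw [← add_pow, add_sub_cancel, one_pow]

lemma choose_le_two_rpow {p : ℝ} (hp0 : 0 < p) (hp1 : p < 1) {n c : ℕ} (hc : c ≤ n) :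
    (n.choose c : ℝ) ≤ 2 ^ (-(c * logb 2 p + (n - c : ℕ) * logb 2 (1 - p))) := by
  have hq : 0 < 1 - p := by linarith
  have hpow : (2 : ℝ) ^ (c * logb 2 p + (n - c : ℕ) * logb 2 (1 - p)) =
      p ^ c * (1 - p) ^ (n - c) := by
    rw [rpow_add two_pos, mul_comm (c : ℝ), mul_comm ((n - c : ℕ) : ℝ),
      rpow_mul_natCast two_pos.le, rpow_mul_natCast two_pos.le,
      rpow_logb two_pos (by norm_num) hp0, rpow_logb two_pos (by norm_num) hq]
  rw [rpow_neg two_pos.le, hpow, ← one_div, le_div_iff₀ (by positivity), ← mul_assoc]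
  exact choose_mul_pow_mul_pow_le_one hp0.le hp1.le hc

/-- Binary cross entropy in bits; `binCrossEntropy γ γ` is `-H(γ)`. -/
noncomputable def binCrossEntropy (p t : ℝ) : ℝ := -(t * logb 2 p + (1 - t) * logb 2 (1 - p))

lemma binCrossEntropy_nonneg {p t : ℝ} (hp0 : 0 ≤ p) (hp1 : p ≤ 1) (ht0 : 0 ≤ t) (ht1 : t ≤ 1) :
    0 ≤ binCrossEntropy p t :=
  neg_nonneg.2 <| add_nonpos
    (mul_nonpos_of_nonneg_of_nonpos ht0 (logb_nonpos one_lt_two hp0 hp1))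
    (mul_nonpos_of_nonneg_of_nonpos (by linarith)
      (logb_nonpos one_lt_two (by linarith) (by linarith)))

lemma binCrossEntropy_le_add (p t : ℝ) :
    binCrossEntropy p t ≤ binCrossEntropy p p + |t - p| * |logb 2 p - logb 2 (1 - p)| := by
  have hdiff : binCrossEntropy p t - binCrossEntropy p p =
      -((t - p) * (logb 2 p - logb 2 (1 - p))) := by
    unfold binCrossEntropy; ring
  linarith [neg_le_abs ((t - p) * (logb 2 p - logb 2 (1 - p))),
    abs_mul (t - p) (logb 2 p - logb 2 (1 - p))]

lemma choose_pred_le_two_rpow_binCrossEntropy {p : ℝ} (hp0 : 0 < p) (hp1 : p < 1) {N c : ℕ}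
    (hc : c ≤ N - 1) :
    ((N - 1).choose c : ℝ) ≤ 2 ^ (N * binCrossEntropy p (c / N)) := by
  rcases Nat.eq_zero_or_pos N with rfl | hN
  · simp [Nat.le_zero.1 hc]
  refine (choose_le_two_rpow hp0 hp1 hc).trans (rpow_le_rpow_of_exponent_le one_le_two ?_)
  have hL : logb 2 (1 - p) < 0 := logb_neg one_lt_two (by linarith) (by linarith)
  have hcast : ((N - 1 - c : ℕ) : ℝ) ≤ N - c := by
    rw [Nat.sub_sub, Nat.cast_sub (by omega)]
    push_cast
    linarith
  have hN' : (N : ℝ) ≠ 0 := by positivity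
  have hexp : N * binCrossEntropy p (c / N) = -(c * logb 2 p + (N - c) * logb 2 (1 - p)) := by
    unfold binCrossEntropy; field_simp
  rw [hexp]
  nlinarith

lemma card_changeSet_density_near_le {p : ℝ} (hp0 : 0 < p) (hp1 : p < 1) (ε : ℝ) {N : ℕ}
    (hN : 0 < N) :
    (#{k ∈ range (2 ^ N) | |#(changeSet N k) / N - p| ≤ ε} : ℝ) ≤
      2 * N * 2 ^ (N * (binCrossEntropy p p + ε * |logb 2 p - logb 2 (1 - p)|)) := by
  set B := (2 : ℝ) ^ (N * (binCrossEntropy p p + ε * |logb 2 p - logb 2 (1 - p)|))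
  set S := {k ∈ range (2 ^ N) | |#(changeSet N k) / N - p| ≤ ε}
  set T := (range N).filter fun c : ℕ => |(c : ℝ) / N - p| ≤ ε
  have hmaps : ∀ k ∈ S, #(changeSet N k) ∈ T := by
    intro k hk
    rw [mem_filter] at hk ⊢
    exact ⟨mem_range.2 ((card_changeSet_le N k).trans_lt (by omega)), hk.2⟩
  have hfiber : ∀ c ∈ T, (#{k ∈ S | #(changeSet N k) = c} : ℝ) ≤ 2 * B := by
    intro c hc
    rw [mem_filter, mem_range] at hc
    have hexp : binCrossEntropy p (c / N) ≤
        binCrossEntropy p p + ε * |logb 2 p - logb 2 (1 - p)| :=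
      (binCrossEntropy_le_add p _).trans (by gcongr; exact hc.2)
    calc (#{k ∈ S | #(changeSet N k) = c} : ℝ)
        ≤ #{k ∈ range (2 ^ N) | #(changeSet N k) = c} := by
          exact_mod_cast card_le_card (filter_subset_filter _ (filter_subset _ _))
      _ ≤ 2 * (N - 1).choose c := by exact_mod_cast card_filter_card_changeSet_eq_le N c
      _ ≤ 2 * 2 ^ (N * binCrossEntropy p (c / N)) := by
          gcongr; exact choose_pred_le_two_rpow_binCrossEntropy hp0 hp1 (by omega)
      _ ≤ 2 * B := by
          gcongr 2 * ?_
          exact rpow_le_rpow_of_exponent_le one_le_two (by gcongr)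
  have hT : (#T : ℝ) ≤ N := by exact_mod_cast (card_filter_le _ _).trans (card_range N).le
  calc (#S : ℝ) = ∑ c ∈ T, (#{k ∈ S | #(changeSet N k) = c} : ℝ) := by
        rw [card_eq_sum_card_fiberwise hmaps]; push_cast; rfl
    _ ≤ ∑ _c ∈ T, 2 * B := sum_le_sum hfiber
    _ = #T * (2 * B) := by rw [sum_const, nsmul_eq_mul]
    _ ≤ 2 * N * B := by nlinarith [show 0 ≤ B by positivity]

lemma ediam_dyadic_Icc (N k : ℕ) :
    Metric.ediam (Set.Icc (k / 2 ^ N : ℝ) ((k + 1) / 2 ^ N)) = ENNReal.ofReal (2⁻¹ ^ N) := by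
  rw [ediam_Icc, ← sub_div, add_sub_cancel_left, one_div, inv_pow]

lemma dimH_le_of_dyadic_cover {s : Set ℝ} {d : ℝ} (hd : 0 ≤ d) (A : ℕ → Finset ℕ)
    (hcover : ∀ᶠ N in atTop, s ⊆ ⋃ k ∈ A N, Set.Icc (k / 2 ^ N : ℝ) ((k + 1) / 2 ^ N))
    (hcount : Tendsto (fun N : ℕ => #(A N) * (2 : ℝ) ^ (-(N * d))) atTop (𝓝 0)) :
    dimH s ≤ ENNReal.ofReal d := by
  have hsum : ∀ N : ℕ, ∑ k : A N, Metric.ediam (Set.Icc (k / 2 ^ N : ℝ) ((k + 1) / 2 ^ N)) ^ d =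
      ENNReal.ofReal (#(A N) * (2 : ℝ) ^ (-(N * d))) := by
    intro N
    have hpow : ((2 : ℝ)⁻¹ ^ N) ^ d = 2 ^ (-(N * d)) := by
      rw [← rpow_natCast, ← rpow_mul (by norm_num), inv_rpow two_pos.le, ← rpow_neg two_pos.le]
    simp only [ediam_dyadic_Icc, sum_const, card_univ, Fintype.card_coe, nsmul_eq_mul]
    rw [ENNReal.ofReal_rpow_of_pos (by positivity), hpow, ENNReal.ofReal_mul (by positivity),
      ENNReal.ofReal_natCast]
  have hμ : μH[d] s = 0 := by
    refine le_antisymm ?_ zero_le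
    calc μH[d] s
        ≤ liminf (fun N : ℕ => ∑ k : A N,
            Metric.ediam (Set.Icc (k / 2 ^ N : ℝ) ((k + 1) / 2 ^ N)) ^ d) atTop := by
          refine Measure.hausdorffMeasure_le_liminf_sum d s (fun N => ENNReal.ofReal (2⁻¹ ^ N)) ?_
            (fun N (k : A N) => Set.Icc (k / 2 ^ N : ℝ) ((k + 1) / 2 ^ N))
            (Eventually.of_forall fun N k => (ediam_dyadic_Icc N k).le) ?_
          · simpa using ENNReal.tendsto_ofReal
              (tendsto_pow_atTop_nhds_zero_of_lt_one (by norm_num : (0 : ℝ) ≤ 2⁻¹) (by norm_num))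
          · filter_upwards [hcover] with N hN x hx
            obtain ⟨k, hk, hxk⟩ := Set.mem_iUnion₂.1 (hN hx)
            exact Set.mem_iUnion.2 ⟨⟨k, hk⟩, hxk⟩
      _ = 0 := by
          simp only [hsum]
          simpa using (ENNReal.tendsto_ofReal hcount).liminf_eq
  refine dimH_le_of_hausdorffMeasure_ne_top (d := d.toNNReal) ?_
  rw [Real.coe_toNNReal d hd, hμ]
  exact ENNReal.zero_ne_top

lemma floor_mul_two_pow_lt {x : ℝ} (hx0 : 0 ≤ x) (hx1 : x < 1) (N : ℕ) : ⌊x * 2 ^ N⌋₊ < 2 ^ N := by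
  rw [Nat.floor_lt (by positivity)]
  push_cast
  nlinarith [pow_pos (two_pos : (0 : ℝ) < 2) N]

lemma mem_Icc_floor_mul_two_pow {x : ℝ} (hx0 : 0 ≤ x) (N : ℕ) :
    x ∈ Set.Icc (⌊x * 2 ^ N⌋₊ / 2 ^ N : ℝ) ((⌊x * 2 ^ N⌋₊ + 1) / 2 ^ N) := by
  rw [Set.mem_Icc, div_le_iff₀ (by positivity), le_div_iff₀ (by positivity)]
  exact ⟨Nat.floor_le (by positivity), (Nat.lt_floor_add_one _).le⟩

lemma dimH_changeCount_density_near_le {γ ε : ℝ} (h0 : 0 < γ) (h1 : γ < 1) (hε : 0 < ε) (M : ℕ) :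
    dimH {x ∈ Set.Ico (0 : ℝ) 1 | ∀ N ≥ M, |changeCount x N / N - γ| ≤ ε} ≤
      ENNReal.ofReal (binCrossEntropy γ γ + ε * |logb 2 γ - logb 2 (1 - γ)| + ε) := by
  set e := binCrossEntropy γ γ + ε * |logb 2 γ - logb 2 (1 - γ)|
  have he : 0 ≤ e := add_nonneg (binCrossEntropy_nonneg h0.le h1.le h0.le h1.le) (by positivity)
  refine dimH_le_of_dyadic_cover (by positivity)
    (fun N => {k ∈ range (2 ^ N) | |#(changeSet N k) / N - γ| ≤ ε}) ?_ ?_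
  · filter_upwards [eventually_ge_atTop M] with N hN x ⟨⟨hx0, hx1⟩, hx⟩
    refine Set.mem_iUnion₂.2 ⟨⌊x * 2 ^ N⌋₊, mem_filter.2 ⟨?_, ?_⟩, mem_Icc_floor_mul_two_pow hx0 N⟩
    · exact mem_range.2 (floor_mul_two_pow_lt hx0 hx1 N)
    · exact changeCount_eq_card_changeSet x N ▸ hx N hN
  · have hr : |(2 : ℝ) ^ (-ε)| < 1 := by
      rw [abs_of_pos (by positivity)]
      exact rpow_lt_one_of_one_lt_of_neg one_lt_two (by linarith)
    refine squeeze_zero' (Eventually.of_forall fun N => by positivity) ?_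
      (by simpa using (tendsto_self_mul_const_pow_of_abs_lt_one hr).const_mul 2)
    filter_upwards [eventually_gt_atTop 0] with N hN
    have hpow : (2 : ℝ) ^ (N * e) * 2 ^ (-(N * (e + ε))) = (2 ^ (-ε)) ^ N := by
      rw [← rpow_add two_pos, ← rpow_mul_natCast two_pos.le]
      ring_nf
    calc #{k ∈ range (2 ^ N) | |#(changeSet N k) / N - γ| ≤ ε} * (2 : ℝ) ^ (-(N * (e + ε)))
        ≤ 2 * N * 2 ^ (N * e) * 2 ^ (-(N * (e + ε))) := by
          gcongr
          exact card_changeSet_density_near_le h0 h1 ε hN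
      _ = 2 * (N * (2 ^ (-ε)) ^ N) := by rw [mul_assoc, hpow, mul_assoc]

/-- For `0 < γ < 1`, the set of `x ∈ [0,1)` whose binary digit sequence
has asymptotic digit-change density `γ` has Hausdorff dimension at most
`-H(γ) = -(γ log₂ γ + (1-γ) log₂(1-γ))`. -/
theorem dimH_digit_change_density_le (γ : ℝ) (h0 : 0 < γ) (h1 : γ < 1) :
    dimH {x : ℝ | x ∈ Set.Ico (0 : ℝ) 1 ∧
        Filter.Tendsto (fun N : ℕ => (changeCount x N : ℝ) / N)
          Filter.atTop (nhds γ)} ≤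
      ENNReal.ofReal (-(γ * Real.logb 2 γ + (1 - γ) * Real.logb 2 (1 - γ))) := by
  set K := |logb 2 γ - logb 2 (1 - γ)|
  have hbound : ∀ ε > 0, dimH {x : ℝ | x ∈ Set.Ico (0 : ℝ) 1 ∧
      Tendsto (fun N : ℕ => (changeCount x N : ℝ) / N) atTop (𝓝 γ)} ≤
        ENNReal.ofReal (binCrossEntropy γ γ + ε * K + ε) := by
    intro ε hε
    calc _ ≤ dimH (⋃ M : ℕ, {x ∈ Set.Ico (0 : ℝ) 1 | ∀ N ≥ M, |changeCount x N / N - γ| ≤ ε}) := by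
          refine dimH_mono fun x ⟨hx, hlim⟩ => ?_
          obtain ⟨M, hM⟩ := Metric.tendsto_atTop.1 hlim ε hε
          exact Set.mem_iUnion.2 ⟨M, hx, fun N hN => (hM N hN).le⟩
      _ = ⨆ M : ℕ, dimH {x ∈ Set.Ico (0 : ℝ) 1 | ∀ N ≥ M, |changeCount x N / N - γ| ≤ ε} :=
          dimH_iUnion _
      _ ≤ _ := iSup_le (dimH_changeCount_density_near_le h0 h1 hε)
  have hlim : Tendsto (fun ε => ENNReal.ofReal (binCrossEntropy γ γ + ε * K + ε)) (𝓝[>] 0)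
      (𝓝 (ENNReal.ofReal (binCrossEntropy γ γ))) := by
    have hcont : Continuous fun ε => ENNReal.ofReal (binCrossEntropy γ γ + ε * K + ε) :=
      ENNReal.continuous_ofReal.comp (by fun_prop)
    simpa using (hcont.tendsto 0).mono_left nhdsWithin_le_nhds
  exact ge_of_tendsto hlim (eventually_nhdsWithin_of_forall hbound)
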